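/- arXiv:1903.07306 — 2 statements merged into one kernel-verified Lean document; each statement's English description precedes it below -/
import Mathlib

section
/- (Strauss radial decay inequality in 2D) There exists C > 0 such that for every radially symmetric u ∈ H^1(ℝ²) and every x with |x| ≥ R > 0: |u(x)| ≤ C |x|^{−1/2} ‖u‖₂^{1/2} ‖∇u‖₂^{1/2}. -/
/-!
Write `u x = f ‖x‖`. In polar coordinates `‖u‖₂² = 2π ∫ s f(s)² ds`, and since the radial
derivative `f'(‖x‖)` is `∇u(x)` applied to a unit vector, `2π ∫ s f'(s)² ds ≤ ‖∇u‖₂²`.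
As `f²` and `(f²)' = 2 f f'` are integrable near infinity, `f² → 0` and
`f(r)² = -∫_r^∞ 2 f f'`; bounding `1 ≤ s / r` on `(r, ∞)` and applying Cauchy–Schwarz gives
`r f(r)² ≤ 2 (∫ s f²)^{1/2} (∫ s f'²)^{1/2}`.
-/

open Set Metric MeasureTheory Module Real

theorem integral_abs_mul_abs_le_sqrt_mul_sqrt {α : Type*} [MeasurableSpace α] {μ : Measure α}
    {f g : α → ℝ} (hf : MemLp f 2 μ) (hg : MemLp g 2 μ) :
    ∫ a, |f a| * |g a| ∂μ ≤ √(∫ a, f a ^ 2 ∂μ) * √(∫ a, g a ^ 2 ∂μ) := by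
  have h := integral_mul_le_Lp_mul_Lq_of_nonneg Real.HolderConjugate.two_two
    (.of_forall fun a => abs_nonneg (f a)) (.of_forall fun a => abs_nonneg (g a))
    (by rw [ENNReal.ofReal_ofNat]; exact hf.abs) (by rw [ENNReal.ofReal_ofNat]; exact hg.abs)
  simpa [Real.sqrt_eq_rpow] using h

theorem integrableOn_Ioi_of_integrableOn_pow_mul (k : ℕ) {φ : ℝ → ℝ} {r : ℝ} (hr : 0 < r)
    (hφ_meas : AEStronglyMeasurable φ (volume.restrict (Ioi r)))
    (hφ : IntegrableOn (fun s => s ^ k * φ s) (Ioi r)) :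
    IntegrableOn φ (Ioi r) := by
  refine (hφ.norm.const_mul (r ^ k)⁻¹).mono' hφ_meas ?_
  filter_upwards [ae_restrict_mem measurableSet_Ioi] with s hs
  rw [le_inv_mul_iff₀ (pow_pos hr k), norm_mul, Real.norm_of_nonneg (pow_nonneg (hr.trans hs).le k)]
  exact mul_le_mul_of_nonneg_right (pow_le_pow_left₀ hr.le hs.le k) (norm_nonneg _)

theorem sq_le_two_mul_integral_Ioi_abs_mul_abs {f f' : ℝ → ℝ} {r : ℝ}
    (hf : ∀ s ∈ Ici r, HasDerivAt f (f' s) s)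
    (hf2 : IntegrableOn (fun s => f s ^ 2) (Ioi r))
    (hff' : IntegrableOn (fun s => f s * f' s) (Ioi r)) :
    f r ^ 2 ≤ 2 * ∫ s in Ioi r, |f s| * |f' s| := by
  have hd : ∀ s ∈ Ici r, HasDerivAt (fun s => f s ^ 2) (2 * (f s * f' s)) s := fun s hs => by
    simpa [mul_assoc] using (hf s hs).fun_pow 2
  have hlim := tendsto_zero_of_hasDerivAt_of_integrableOn_Ioi
    (fun s hs => hd s (Ioi_subset_Ici_self hs)) (hff'.const_mul 2) hf2
  have hftc := integral_Ioi_of_hasDerivAt_of_tendsto' hd (hff'.const_mul 2) hlim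
  calc f r ^ 2 = -∫ s in Ioi r, 2 * (f s * f' s) := by rw [hftc]; ring
    _ ≤ ∫ s in Ioi r, |2 * (f s * f' s)| := (neg_le_abs _).trans abs_integral_le_integral_abs
    _ = 2 * ∫ s in Ioi r, |f s| * |f' s| := by
      rw [← integral_const_mul]; simp only [abs_mul, abs_two]

theorem pow_mul_integral_Ioi_abs_mul_abs_le (k : ℕ) {f g : ℝ → ℝ} {r : ℝ} (hr : 0 ≤ r)
    (hf_meas : AEStronglyMeasurable f (volume.restrict (Ioi r)))
    (hg_meas : AEStronglyMeasurable g (volume.restrict (Ioi r)))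
    (hf : IntegrableOn (fun s => s ^ k * f s ^ 2) (Ioi r))
    (hg : IntegrableOn (fun s => s ^ k * g s ^ 2) (Ioi r)) :
    r ^ k * ∫ s in Ioi r, |f s| * |g s| ≤
      √(∫ s in Ioi r, s ^ k * f s ^ 2) * √(∫ s in Ioi r, s ^ k * g s ^ 2) := by
  set μ := volume.restrict (Ioi r)
  have hw : ∀ᵐ s ∂μ, √(s ^ k) ^ 2 = s ^ k := ae_restrict_of_forall_mem measurableSet_Ioi
    fun s hs => Real.sq_sqrt (pow_nonneg (hr.trans_lt hs).le k)
  have hsq : ∀ φ : ℝ → ℝ, (fun s => (√(s ^ k) * φ s) ^ 2) =ᵐ[μ] fun s => s ^ k * φ s ^ 2 :=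
    fun φ => by filter_upwards [hw] with s hs; rw [mul_pow, hs]
  have hweight_meas : AEStronglyMeasurable (fun s : ℝ => √(s ^ k)) μ :=
    (Real.continuous_sqrt.comp (continuous_pow k)).aestronglyMeasurable
  have hF : MemLp (fun s => √(s ^ k) * f s) 2 μ :=
    (memLp_two_iff_integrable_sq (hweight_meas.mul hf_meas)).2 (hf.congr (hsq f).symm)
  have hG : MemLp (fun s => √(s ^ k) * g s) 2 μ :=
    (memLp_two_iff_integrable_sq (hweight_meas.mul hg_meas)).2 (hg.congr (hsq g).symm)
  have hFG : ∀ᵐ s ∂μ, |√(s ^ k) * f s| * |√(s ^ k) * g s| = s ^ k * (|f s| * |g s|) := by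
    filter_upwards [hw] with s hs
    rw [abs_mul, abs_mul, abs_of_nonneg (Real.sqrt_nonneg _)]
    linear_combination (|f s| * |g s|) * hs
  have hFG_int : Integrable (fun s => |√(s ^ k) * f s| * |√(s ^ k) * g s|) μ := by
    simpa only [Pi.mul_apply, Real.norm_eq_abs, abs_mul] using (hF.integrable_mul hG).norm
  calc r ^ k * ∫ s in Ioi r, |f s| * |g s| = ∫ s, r ^ k * (|f s| * |g s|) ∂μ :=
        (integral_const_mul _ _).symm
    _ ≤ ∫ s, |√(s ^ k) * f s| * |√(s ^ k) * g s| ∂μ := by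
        refine integral_mono_of_nonneg (.of_forall fun s => by positivity) hFG_int ?_
        filter_upwards [ae_restrict_mem measurableSet_Ioi, hFG] with s hs hs'
        rw [hs']
        exact mul_le_mul_of_nonneg_right (pow_le_pow_left₀ hr hs.le k) (by positivity)
    _ ≤ √(∫ s, (√(s ^ k) * f s) ^ 2 ∂μ) * √(∫ s, (√(s ^ k) * g s) ^ 2 ∂μ) :=
        integral_abs_mul_abs_le_sqrt_mul_sqrt hF hG
    _ = _ := by rw [integral_congr_ae (hsq f), integral_congr_ae (hsq g)]

theorem pow_mul_sq_le_of_hasDerivAt (k : ℕ) {f f' : ℝ → ℝ} {r : ℝ} (hr : 0 < r)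
    (hf : ∀ s ∈ Ici r, HasDerivAt f (f' s) s)
    (hA : IntegrableOn (fun s => s ^ k * f s ^ 2) (Ioi r))
    (hB : IntegrableOn (fun s => s ^ k * f' s ^ 2) (Ioi r)) :
    r ^ k * f r ^ 2 ≤
      2 * √(∫ s in Ioi r, s ^ k * f s ^ 2) * √(∫ s in Ioi r, s ^ k * f' s ^ 2) := by
  have hf_meas : AEStronglyMeasurable f (volume.restrict (Ioi r)) :=
    ContinuousOn.aestronglyMeasurable (fun s hs =>
      (hf s (Ioi_subset_Ici_self hs)).continuousAt.continuousWithinAt) measurableSet_Ioi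
  have hf'_meas : AEStronglyMeasurable f' (volume.restrict (Ioi r)) :=
    (measurable_deriv f).aestronglyMeasurable.congr (ae_restrict_of_forall_mem measurableSet_Ioi
      fun s hs => (hf s (Ioi_subset_Ici_self hs)).deriv)
  have hf2 := integrableOn_Ioi_of_integrableOn_pow_mul k hr (hf_meas.pow 2) hA
  have hf'2 := integrableOn_Ioi_of_integrableOn_pow_mul k hr (hf'_meas.pow 2) hB
  have hff' : IntegrableOn (fun s => f s * f' s) (Ioi r) := by
    refine ((hf2.add hf'2).div_const 2).mono' (hf_meas.mul hf'_meas) (.of_forall fun s => ?_)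
    simp only [Pi.add_apply, Pi.pow_apply, Real.norm_eq_abs, abs_mul]
    nlinarith [two_mul_le_add_sq |f s| |f' s|, sq_abs (f s), sq_abs (f' s)]
  calc r ^ k * f r ^ 2 ≤ r ^ k * (2 * ∫ s in Ioi r, |f s| * |f' s|) :=
        mul_le_mul_of_nonneg_left (sq_le_two_mul_integral_Ioi_abs_mul_abs hf hf2 hff')
          (pow_pos hr k).le
    _ = 2 * (r ^ k * ∫ s in Ioi r, |f s| * |f' s|) := by ring
    _ ≤ 2 * (√(∫ s in Ioi r, s ^ k * f s ^ 2) * √(∫ s in Ioi r, s ^ k * f' s ^ 2)) :=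
        mul_le_mul_of_nonneg_left
          (pow_mul_integral_Ioi_abs_mul_abs_le k hr.le hf_meas hf'_meas hA hB) two_pos.le
    _ = _ := by ring

theorem HasFDerivAt.hasDerivAt_comp_smul_const {E F : Type*} [NormedAddCommGroup E]
    [NormedSpace ℝ E] [NormedAddCommGroup F] [NormedSpace ℝ F] {u : E → F} {u' : E →L[ℝ] F}
    {e : E} {s : ℝ} (h : HasFDerivAt u u' (s • e)) :
    HasDerivAt (fun t : ℝ => u (t • e)) (u' e) s :=
  h.comp_hasDerivAt s (by simpa using (hasDerivAt_id s).smul_const e)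

theorem norm_apply_smul_le_of_radial {E F : Type*} [NormedAddCommGroup E] [NormedSpace ℝ E]
    [NormedAddCommGroup F] [NormedSpace ℝ F] {u : E → F} {u' : E → E →L[ℝ] F}
    (hrad : ∀ x y, ‖x‖ = ‖y‖ → u x = u y) (hder : ∀ x, HasFDerivAt u (u' x) x)
    {e : E} (he : ‖e‖ = 1) (z : E) :
    ‖u' (‖z‖ • e) e‖ ≤ ‖u' z‖ := by
  rcases eq_or_ne z 0 with rfl | hz
  · simpa [he] using (u' 0).le_opNorm e
  set v := ‖z‖⁻¹ • z
  have hv : ‖v‖ = 1 := norm_smul_inv_norm hz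
  have hzv : ‖z‖ • v = z := smul_inv_smul₀ (norm_ne_zero_iff.2 hz) z
  have hev : (fun s : ℝ => u (s • e)) = fun s => u (s • v) :=
    funext fun s => hrad _ _ (by simp [norm_smul, he, hv])
  rw [(hder _).hasDerivAt_comp_smul_const.unique
    (by rw [hev]; exact (hder _).hasDerivAt_comp_smul_const), hzv]
  simpa [hv] using (u' z).le_opNorm v

section

variable {E : Type*} [NormedAddCommGroup E] [NormedSpace ℝ E] [FiniteDimensional ℝ E]
  [MeasurableSpace E] [BorelSpace E] [Nontrivial E] (μ : Measure E) [μ.IsAddHaarMeasure]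

theorem finrank_mul_setIntegral_Ioi_le_integral_fun_norm {φ : ℝ → ℝ} (hφ_nonneg : 0 ≤ φ)
    (hφ : Integrable (fun x => φ ‖x‖) μ) {r : ℝ} (hr : 0 ≤ r) :
    finrank ℝ E * μ.real (ball 0 1) * ∫ s in Ioi r, s ^ (finrank ℝ E - 1) * φ s ≤
      ∫ x, φ ‖x‖ ∂μ := by
  rw [integral_fun_norm_addHaar μ φ, nsmul_eq_mul, smul_eq_mul, mul_assoc]
  gcongr
  refine setIntegral_mono_set ((integrable_fun_norm_addHaar μ).1 hφ) ?_
    (Ioi_subset_Ioi hr).eventuallyLE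
  exact ae_restrict_of_forall_mem measurableSet_Ioi fun s hs =>
    mul_nonneg (pow_nonneg (le_of_lt hs) _) (hφ_nonneg s)

theorem mul_sq_le_of_radial {u : E → ℝ} {u' : E → E →L[ℝ] ℝ}
    (hrad : ∀ x y : E, ‖x‖ = ‖y‖ → u x = u y) (hder : ∀ x, HasFDerivAt u (u' x) x)
    (hu : Integrable (fun x => u x ^ 2) μ) (hu' : Integrable (fun x => ‖u' x‖ ^ 2) μ)
    {x : E} (hx : x ≠ 0) :
    finrank ℝ E * μ.real (ball 0 1) * ‖x‖ ^ (finrank ℝ E - 1) * u x ^ 2 ≤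
      2 * √(∫ y, u y ^ 2 ∂μ) * √(∫ y, ‖u' y‖ ^ 2 ∂μ) := by
  obtain ⟨e, he⟩ := exists_norm_eq E zero_le_one
  set k := finrank ℝ E - 1
  set c := finrank ℝ E * μ.real (ball 0 1)
  set r := ‖x‖
  have hr : 0 < r := norm_pos_iff.2 hx
  have hc : 0 ≤ c := by positivity
  set f : ℝ → ℝ := fun s => u (s • e)
  set f' : ℝ → ℝ := fun s => u' (s • e) e
  have hfz : ∀ z, u z = f ‖z‖ := fun z => hrad _ _ (by simp [norm_smul, he])
  have hf'z : ∀ z, f' ‖z‖ ^ 2 ≤ ‖u' z‖ ^ 2 := fun z => by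
    rw [← sq_abs, ← Real.norm_eq_abs]
    exact pow_le_pow_left₀ (norm_nonneg _) (norm_apply_smul_le_of_radial hrad hder he z) 2
  have hf : ∀ s, HasDerivAt f (f' s) s := fun s => (hder _).hasDerivAt_comp_smul_const
  have hf'_meas : Measurable f' := by
    rw [show f' = deriv f from funext fun s => (hf s).deriv.symm]
    exact measurable_deriv f
  have hu_f : Integrable (fun z => f ‖z‖ ^ 2) μ := by simpa only [hfz] using hu
  have hu_f' : Integrable (fun z => f' ‖z‖ ^ 2) μ :=
    hu'.mono' ((hf'_meas.comp measurable_norm).pow_const 2).aestronglyMeasurable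
      (.of_forall fun z => (Real.norm_of_nonneg (sq_nonneg _)).trans_le (hf'z z))
  have hA := ((integrable_fun_norm_addHaar μ (f := fun s => f s ^ 2)).1 hu_f).mono_set
    (Ioi_subset_Ioi hr.le)
  have hB := ((integrable_fun_norm_addHaar μ (f := fun s => f' s ^ 2)).1 hu_f').mono_set
    (Ioi_subset_Ioi hr.le)
  have hA_le : c * ∫ s in Ioi r, s ^ k * f s ^ 2 ≤ ∫ y, u y ^ 2 ∂μ := by
    simpa only [hfz] using
      finrank_mul_setIntegral_Ioi_le_integral_fun_norm μ (fun s => sq_nonneg (f s)) hu_f hr.le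
  have hB_le : c * ∫ s in Ioi r, s ^ k * f' s ^ 2 ≤ ∫ y, ‖u' y‖ ^ 2 ∂μ :=
    (finrank_mul_setIntegral_Ioi_le_integral_fun_norm μ (fun s => sq_nonneg (f' s)) hu_f'
      hr.le).trans (integral_mono hu_f' hu' hf'z)
  have h1d := pow_mul_sq_le_of_hasDerivAt k hr (fun s _ => hf s) hA hB
  set A := ∫ s in Ioi r, s ^ k * f s ^ 2
  set B := ∫ s in Ioi r, s ^ k * f' s ^ 2
  calc c * r ^ k * u x ^ 2 = c * (r ^ k * f r ^ 2) := by rw [hfz]; ring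
    _ ≤ c * (2 * √A * √B) := mul_le_mul_of_nonneg_left h1d hc
    _ = 2 * √(c * A) * √(c * B) := by
      rw [Real.sqrt_mul hc, Real.sqrt_mul hc]
      linear_combination (2 * √A * √B) * (Real.mul_self_sqrt hc).symm
    _ ≤ 2 * √(∫ y, u y ^ 2 ∂μ) * √(∫ y, ‖u' y‖ ^ 2 ∂μ) := by gcongr

end

/-- Strauss radial decay inequality in 2D: there is `C > 0` such that every radially
symmetric `u ∈ H¹(ℝ²)` satisfies
`|u(x)| ≤ C|x|^{−1/2}‖u‖₂^{1/2}‖∇u‖₂^{1/2}` for `|x| ≥ R > 0`. -/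
theorem strauss_radial_decay :
    ∃ C > 0, ∀ (u : EuclideanSpace ℝ (Fin 2) → ℝ)
      (u' : EuclideanSpace ℝ (Fin 2) → EuclideanSpace ℝ (Fin 2) →L[ℝ] ℝ),
      (∀ x y : EuclideanSpace ℝ (Fin 2), ‖x‖ = ‖y‖ → u x = u y) →
      (∀ x, HasFDerivAt u (u' x) x) →
      Integrable (fun x => (u x) ^ 2) volume →
      Integrable (fun x => ‖u' x‖ ^ 2) volume →
      ∀ R : ℝ, 0 < R → ∀ x : EuclideanSpace ℝ (Fin 2), R ≤ ‖x‖ →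
        |u x| ≤ C * ‖x‖ ^ (-(1 : ℝ) / 2)
          * (∫ y, (u y) ^ 2) ^ ((1 : ℝ) / 4) * (∫ y, ‖u' y‖ ^ 2) ^ ((1 : ℝ) / 4) := by
  refine ⟨(√π)⁻¹, by positivity, fun u u' hrad hder hu hu' R hR x hx => ?_⟩
  have hx0 : 0 < ‖x‖ := hR.trans_le hx
  have hA : 0 ≤ ∫ y, u y ^ 2 := integral_nonneg fun _ => sq_nonneg _
  have hB : 0 ≤ ∫ y, ‖u' y‖ ^ 2 := integral_nonneg fun _ => sq_nonneg _
  have hquarter : ∀ a : ℝ, 0 ≤ a → (a ^ (1 / 4 : ℝ)) ^ 2 = √a := fun a ha => by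
    rw [← Real.rpow_mul_natCast ha, Real.sqrt_eq_rpow]; norm_num
  have hkey := mul_sq_le_of_radial volume hrad hder hu hu' (norm_pos_iff.1 hx0)
  simp only [finrank_euclideanSpace_fin, Measure.real, EuclideanSpace.volume_ball_fin_two] at hkey
  norm_num [Real.pi_pos.le] at hkey
  refine abs_le_of_sq_le_sq ?_ (by positivity)
  rw [mul_pow, mul_pow, mul_pow, inv_pow, Real.sq_sqrt Real.pi_pos.le, hquarter _ hA,
    hquarter _ hB, ← Real.rpow_mul_natCast hx0.le, show (-(1 : ℝ) / 2) * (2 : ℕ) = -1 by norm_num,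
    Real.rpow_neg_one, ← mul_inv, mul_assoc, inv_mul_eq_div, le_div_iff₀ (by positivity)]
  linarith
end

section
/- Assume p > 4 and let φ be a solution in C([0,T); H^1(ℝ²)) of the Chern–Simons–Schrödinger system with φ(0) = φ₀ ∈ 𝒪_c := {u ∈ S(c) : E(u) < γ(c), Q(u) > 0}, where mass and energy are conserved. Then Q(φ(t)) > 0 for all t ∈ [0,T); in particular, using E(φ(t)) − Q(φ(t))/(p−2) = ((p−4)/(2(p−2)))(‖D₁φ(t)‖₂² + ‖D₂φ(t)‖₂²), the magnetic kinetic energy is uniformly bounded and the solution extends globally. -/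
/-- Global existence mechanism for `p > 4`: if `φ` is a solution with conserved mass
and energy, initial datum in `𝒪_c = {u ∈ S(c) : E(u) < γ(c), Q(u) > 0}`, then
`Q(φ(t)) > 0` for all `t ∈ [0,T)`, and by
`E(u) − Q(u)/(p−2) = ((p−4)/(2(p−2)))·K(u)` (with `K(u) = ‖D₁u‖₂² + ‖D₂u‖₂²`) the
magnetic kinetic energy stays uniformly bounded. -/
theorem global_existence_core
    {H : Type*} (p γ : ℝ) (hp : 4 < p) (hγ : 0 < γ)
    (Sc : Set H) (E Q K : H → ℝ)
    (hEQ : ∀ u : H, E u - Q u / (p - 2) = (p - 4) / (2 * (p - 2)) * K u)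
    (hγle : ∀ u ∈ Sc, Q u = 0 → γ ≤ E u)
    (T : ℝ) (hT : 0 < T) (φ : ℝ → H)
    (hQcont : ContinuousOn (fun t => Q (φ t)) (Set.Ico 0 T))
    (hmass : ∀ t ∈ Set.Ico (0 : ℝ) T, φ t ∈ Sc)
    (hcons : ∀ t ∈ Set.Ico (0 : ℝ) T, E (φ t) = E (φ 0))
    (hE0 : E (φ 0) < γ) (hQ0 : 0 < Q (φ 0)) :
    (∀ t ∈ Set.Ico (0 : ℝ) T, 0 < Q (φ t)) ∧
    (∀ t ∈ Set.Ico (0 : ℝ) T, K (φ t) ≤ 2 * (p - 2) / (p - 4) * E (φ 0)) := by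
  have hne : ∀ t ∈ Set.Ico (0 : ℝ) T, Q (φ t) ≠ 0 := by
    intro t ht h0
    have h1 := hγle _ (hmass t ht) h0
    rw [hcons t ht] at h1
    linarith
  have hQpos : ∀ t ∈ Set.Ico (0 : ℝ) T, 0 < Q (φ t) := by
    intro t ht
    rcases lt_trichotomy (Q (φ t)) 0 with hlt | heq | hgt
    · exfalso
      have h0t : (0 : ℝ) ≤ t := ht.1
      have hsub : Set.Icc (0 : ℝ) t ⊆ Set.Ico 0 T := by
        intro x hx
        exact ⟨hx.1, lt_of_le_of_lt hx.2 ht.2⟩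
      have hcont' : ContinuousOn (fun s => Q (φ s)) (Set.Icc 0 t) :=
        hQcont.mono hsub
      have := intermediate_value_Icc' h0t hcont'
        (Set.mem_Icc.mpr ⟨le_of_lt hlt, le_of_lt hQ0⟩)
      obtain ⟨c, hc, hc0⟩ := this
      exact hne c (hsub hc) hc0
    · exact absurd heq (hne t ht)
    · exact hgt
  refine ⟨hQpos, fun t ht => ?_⟩
  have h2 : (0 : ℝ) < p - 2 := by linarith
  have h4 : (0 : ℝ) < p - 4 := by linarith
  have hE := hEQ (φ t)
  have hQt := hQpos t ht
  have hEt := hcons t ht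
  have hlt : (p - 4) / (2 * (p - 2)) * K (φ t) < E (φ 0) := by
    rw [← hE, hEt]
    have : 0 < Q (φ t) / (p - 2) := div_pos hQt h2
    linarith
  have hc : (0 : ℝ) < (p - 4) / (2 * (p - 2)) := div_pos h4 (by linarith)
  rw [div_mul_eq_mul_div, le_div_iff₀ h4]
  calc K (φ t) * (p - 4) = (p - 4) / (2 * (p - 2)) * K (φ t) * (2 * (p - 2)) := by
        field_simp
    _ ≤ E (φ 0) * (2 * (p - 2)) := by nlinarith
    _ = 2 * (p - 2) * E (φ 0) := by ring
end
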